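/- arXiv:1508.05492 — 2 statements merged into one kernel-verified Lean document; each statement's English description precedes it below -/
import Mathlib

section
/- Let G be a linearly ordered abelian group, and let p ≥ 2 be a natural number such that every element of G is divisible by p (i.e., for every g ∈ G there is h ∈ G with p·h = g). Let (C, D) be a cut of G, meaning C and D are nonempty, C ∪ D = G, and every element of C is less than every element of D. If the set {y - x : x ∈ C, y ∈ D} has an infimum m in G, then m = 0. -/
/-!
Every gap `y - x` is positive, so `0 ≤ m`. Conversely `m ≤ t` for every `t > 0`: pick a gap
`y - x < m + t`; if `x + t` lay in `C`, the gap `y - (x + t)` would be below `m`, so `x + t ∈ D`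
and `t = (x + t) - x` is itself a gap. Divisibility rules out a least positive element
(`m = p • t` forces `0 < t < m`), hence `m = 0`.
-/

def cutGaps {G : Type*} [AddCommGroup G] (C D : Set G) : Set G :=
  {d : G | ∃ x ∈ C, ∃ y ∈ D, d = y - x}

section Cut

variable {G : Type*} [AddCommGroup G] [PartialOrder G] [IsOrderedAddMonoid G]
  {C D : Set G} {m : G}

theorem zero_le_of_isGLB_cutGaps (hlt : ∀ x ∈ C, ∀ y ∈ D, x < y) (hm : IsGLB (cutGaps C D) m) :
    0 ≤ m :=
  hm.2 fun _ ⟨x, hx, y, hy, hd⟩ => hd ▸ sub_nonneg.mpr (hlt x hx y hy).le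

theorem le_of_isGLB_cutGaps (hunion : C ∪ D = Set.univ) (hm : IsGLB (cutGaps C D) m)
    {t : G} (ht : 0 < t) : m ≤ t := by
  have hnot : m + t ∉ lowerBounds (cutGaps C D) := fun h =>
    (lt_add_of_pos_right m ht).not_ge (hm.2 h)
  obtain ⟨_, ⟨x, hx, y, hy, rfl⟩, hgap⟩ := not_forall₂.mp hnot
  have hxt : x + t ∈ C ∪ D := hunion ▸ Set.mem_univ _
  rcases hxt with hxtC | hxtD
  · have hle : m ≤ y - (x + t) := hm.1 ⟨x + t, hxtC, y, hy, rfl⟩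
    exact (hgap (by rwa [sub_add_eq_sub_sub, le_sub_iff_add_le] at hle)).elim
  · simpa using hm.1 ⟨x, hx, x + t, hxtD, rfl⟩

end Cut

theorem exists_pos_lt_of_nsmul_surjective {G : Type*} [AddCommGroup G] [LinearOrder G]
    [IsOrderedAddMonoid G] {p : ℕ} (hp : 2 ≤ p) (hdiv : Function.Surjective (fun h : G => p • h))
    {m : G} (hm : 0 < m) : ∃ t, 0 < t ∧ t < m := by
  obtain ⟨t, rfl⟩ := hdiv m
  have ht : 0 < t := (nsmul_pos_iff (by omega)).mp hm
  refine ⟨t, ht, ?_⟩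
  calc t < 2 • t := by rw [two_nsmul]; exact lt_add_of_pos_left t ht
    _ ≤ p • t := nsmul_le_nsmul_left ht.le hp

theorem cut_inf_eq_zero_general {G : Type*} [AddCommGroup G] [LinearOrder G] [IsOrderedAddMonoid G]
    (p : ℕ) (hp : 2 ≤ p) (hdiv : Function.Surjective (fun h : G => p • h))
    (C D : Set G)
    (hunion : C ∪ D = Set.univ)
    (hlt : ∀ x ∈ C, ∀ y ∈ D, x < y)
    (m : G) (hm : IsGLB {d : G | ∃ x ∈ C, ∃ y ∈ D, d = y - x} m) :
    m = 0 := by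
  have hm : IsGLB (cutGaps C D) m := hm
  refine le_antisymm (not_lt.mp fun hpos => ?_) (zero_le_of_isGLB_cutGaps hlt hm)
  obtain ⟨t, ht, htm⟩ := exists_pos_lt_of_nsmul_surjective hp hdiv hpos
  exact htm.not_ge (le_of_isGLB_cutGaps hunion hm ht)

theorem cut_inf_eq_zero {G : Type*} [AddCommGroup G] [LinearOrder G] [IsOrderedAddMonoid G]
    (p : ℕ) (hp : 2 ≤ p) (hdiv : Function.Surjective (fun h : G => p • h))
    (C D : Set G) (hC : C.Nonempty) (hD : D.Nonempty)
    (hunion : C ∪ D = Set.univ)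
    (hlt : ∀ x ∈ C, ∀ y ∈ D, x < y)
    (m : G) (hm : IsGLB {d : G | ∃ x ∈ C, ∃ y ∈ D, d = y - x} m) :
    m = 0 :=
  cut_inf_eq_zero_general p hp hdiv C D hunion hlt m hm
end

section
/- There is no multiplication operation · on ℚ such that (ℚ, +, ·, ≤), with the standard addition and standard linear order, is a linearly ordered field in which every nonnegative element has a square root. In other words, the ordered additive group of ℚ cannot be expanded to a real closed (or even square-root-closed) ordered field. -/
theorem no_sqrt_closed_field_on_rat :
    ¬ ∃ (mul : ℚ → ℚ → ℚ) (e : ℚ),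
      (∀ x y : ℚ, mul x y = mul y x) ∧
      (∀ x y z : ℚ, mul (mul x y) z = mul x (mul y z)) ∧
      (∀ x y z : ℚ, mul x (y + z) = mul x y + mul x z) ∧
      (∀ x : ℚ, mul e x = x) ∧
      (∀ x : ℚ, x ≠ 0 → ∃ y : ℚ, mul x y = e) ∧
      (∀ x y : ℚ, 0 < x → 0 < y → 0 < mul x y) ∧
      (∀ x : ℚ, 0 ≤ x → ∃ y : ℚ, mul y y = x) := by
  rintro ⟨mul, e, comm, -, distrib, idl, -, pos, sqrt⟩
  -- mul is additive in the second argument, hence ℚ-linear: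
  have key : ∀ x y : ℚ, mul x y = y * mul x 1 := by
    intro x y
    have hadd : ∀ a b : ℚ, mul x (a + b) = mul x a + mul x b := distrib x
    have := map_rat_smul (AddMonoidHom.mk' (mul x) hadd) y 1
    simpa [smul_eq_mul] using this
  set c := mul 1 1 with hc
  have hmul : ∀ x y : ℚ, mul x y = c * x * y := by
    intro x y
    rw [key x y, comm x 1, key 1 x]
    ring
  have hcpos : 0 < c := by
    have := pos 1 1 one_pos one_pos
    simpa [hmul] using this
  -- get a rational square root of 2
  obtain ⟨y, hy⟩ := sqrt (2 * c) (by positivity)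
  rw [hmul] at hy
  have hy2 : y * y = 2 := by
    have : c * (y * y) = c * 2 := by linarith [hy]
    exact mul_left_cancel₀ (ne_of_gt hcpos) this
  -- contradiction with irrationality of √2
  have : ((y : ℝ)) ^ 2 = 2 := by
    push_cast [sq]
    exact_mod_cast congrArg (Rat.cast : ℚ → ℝ) hy2
  have habs : Real.sqrt 2 = |(y : ℝ)| := by
    rw [← this, Real.sqrt_sq_eq_abs]
  have : Irrational (Real.sqrt 2) := irrational_sqrt_two
  rw [habs, ← Rat.cast_abs] at this
  exact this.ne_rat |y| rfl
end
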